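/- arXiv:2410.11311 — 2 statements merged into one kernel-verified Lean document; each statement's English description precedes it below -/
import Mathlib

section
/- Let U ⊆ ℂⁿ be open and let (ω_{i j̄}) be a smooth positive-definite Hermitian matrix-valued function on U satisfying the Kähler condition ∂_{z^k} ω_{i j̄} = ∂_{z^i} ω_{k j̄} for all i, j, k. Let (ω^{i j̄}) be the inverse matrix (with convention ω_{i j̄} ω^{k j̄} = δ_i^k summed over j), let (Ric)_{k l̄} = −∂_{z^k} ∂_{z̄^l} log det(ω_{i j̄}) be the Ricci curvature coefficients, and Δf = 4π·ω^{j̄ i} ∂_{z̄^j} ∂_{z^i} f. If f₀ : U → ℂ is smooth and the functions ω^{i j̄} ∂_{z̄^j} f₀ are holomorphic on U for every index i, then for every index l one has (1/4π)·∂_{z̄^l}(Δf₀) = (∂_{z̄^j} f₀)·ω^{k j̄}·(Ric)_{k l̄} on U; equivalently, ∂̄((1/4π)Δf₀) = ι_{V_{f₀}^{1,0}} Ric, where V_{f₀}^{1,0} = (2π/√-1)·ω^{j̄ i} (∂f₀/∂z̄^j) ∂/∂z^i. -/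
open scoped ComplexOrder

/-!
# The local identity `(1/4π)·∂̄(Δf₀) = ι_{V_{f₀}^{1,0}} Ric` on a Kähler domain

We work on an open set `U ⊆ ℂⁿ` (modelled as `Fin n → ℂ`) with Wirtinger derivatives
`∂_{zⁱ} = (1/2)(∂_x − √-1·∂_y)` and `∂_{z̄ⁱ} = (1/2)(∂_x + √-1·∂_y)` in the `i`-th
coordinate.  The Kähler form is `ω = (√-1/2π)·ω_{i j̄} dzⁱ ∧ dz̄ʲ`, with coefficient
matrix `g x i j = ω_{i j̄}(x)`, inverse matrix `ginv x i j = ω^{i j̄}(x)` normalized by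
`ω_{i j̄} ω^{k j̄} = δᵢᵏ` (sum over `j`) as in the statement, with the sign convention
`ω^{i j̄} = −ω^{j̄ i}`, Ricci curvature `(Ric)_{k l̄} = −∂_{zᵏ} ∂_{z̄ˡ} log det(ω_{i j̄})`
and Laplacian `Δf = 4π·ω^{j̄ i} ∂_{z̄ʲ} ∂_{zⁱ} f = 4π·∑ (−ω^{i j̄}) ∂_{z̄ʲ} ∂_{zⁱ} f`.

**Statement.** If `f₀` is smooth on `U` and each function `∑_j ω^{i j̄} ∂_{z̄ʲ} f₀` is
holomorphic on `U`, then for every index `l` and `x ∈ U`,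
`(1/4π)·∂_{z̄ˡ}(Δf₀) = ∑_{j,k} (∂_{z̄ʲ} f₀)·ω^{k j̄}·(Ric)_{k l̄}` on `U`
(equivalently `∂̄((1/4π)Δf₀) = ι_{V_{f₀}^{1,0}} Ric`).
-/

/-- Wirtinger derivative `∂/∂zⁱ` of a (real-differentiable) function `f : ℂⁿ → ℂ`. -/
noncomputable def wirtingerD {n : ℕ} (i : Fin n) (f : (Fin n → ℂ) → ℂ)
    (x : Fin n → ℂ) : ℂ :=
  (1 / 2 : ℂ) *
    (fderiv ℝ f x (Pi.single i 1) - Complex.I * fderiv ℝ f x (Pi.single i Complex.I))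

/-- Wirtinger derivative `∂/∂z̄ⁱ` of a (real-differentiable) function `f : ℂⁿ → ℂ`. -/
noncomputable def wirtingerDBar {n : ℕ} (i : Fin n) (f : (Fin n → ℂ) → ℂ)
    (x : Fin n → ℂ) : ℂ :=
  (1 / 2 : ℂ) *
    (fderiv ℝ f x (Pi.single i 1) + Complex.I * fderiv ℝ f x (Pi.single i Complex.I))

namespace WirtingerAux

variable {n : ℕ} {c c' : ℂ} {i j : Fin n} {f f₁ f₂ : (Fin n → ℂ) → ℂ} {x : Fin n → ℂ}

/-- generalized Wirtinger-type derivative. -/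
noncomputable def wop (c : ℂ) (i : Fin n) (f : (Fin n → ℂ) → ℂ) (x : Fin n → ℂ) : ℂ :=
  (1 / 2 : ℂ) *
    (fderiv ℝ f x (Pi.single i 1) + c * fderiv ℝ f x (Pi.single i Complex.I))

theorem wirtingerD_eq (i : Fin n) (f : (Fin n → ℂ) → ℂ) :
    wirtingerD i f = wop (-Complex.I) i f := by
  funext x; unfold wirtingerD wop; ring

theorem wirtingerDBar_eq (i : Fin n) (f : (Fin n → ℂ) → ℂ) :
    wirtingerDBar i f = wop Complex.I i f := rfl

theorem wop_congr (h : f₁ =ᶠ[nhds x] f₂) : wop c i f₁ x = wop c i f₂ x := by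
  unfold wop; rw [h.fderiv_eq]

theorem wop_congr_of_eqOn {U : Set (Fin n → ℂ)} (hU : IsOpen U) (hx : x ∈ U)
    (h : ∀ y ∈ U, f₁ y = f₂ y) : wop c i f₁ x = wop c i f₂ x :=
  wop_congr (Filter.eventuallyEq_of_mem (hU.mem_nhds hx) h)

theorem wop_const (a : ℂ) : wop c i (fun _ => a) x = 0 := by
  simp [wop]

theorem wop_add (h₁ : DifferentiableAt ℝ f₁ x) (h₂ : DifferentiableAt ℝ f₂ x) :
    wop c i (fun y => f₁ y + f₂ y) x = wop c i f₁ x + wop c i f₂ x := by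
  unfold wop; rw [fderiv_fun_add h₁ h₂]; simp; ring

theorem wop_neg : wop c i (fun y => -f₁ y) x = -wop c i f₁ x := by
  unfold wop; rw [fderiv_fun_neg]; simp; ring

theorem wop_sub (h₁ : DifferentiableAt ℝ f₁ x) (h₂ : DifferentiableAt ℝ f₂ x) :
    wop c i (fun y => f₁ y - f₂ y) x = wop c i f₁ x - wop c i f₂ x := by
  have : (fun y => f₁ y - f₂ y) = fun y => f₁ y + -f₂ y := by funext y; ring
  rw [this, wop_add (f₂ := fun y => -f₂ y) h₁ h₂.neg]
  have : (fun y => -f₂ y) = fun y => -f₂ y := rfl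
  rw [wop_neg]; ring

theorem wop_sum {ι : Type*} (s : Finset ι) {F : ι → (Fin n → ℂ) → ℂ}
    (h : ∀ j ∈ s, DifferentiableAt ℝ (F j) x) :
    wop c i (fun y => ∑ j ∈ s, F j y) x = ∑ j ∈ s, wop c i (F j) x := by
  unfold wop
  rw [fderiv_fun_sum h]
  simp only [ContinuousLinearMap.coe_sum', Finset.sum_apply, Finset.mul_sum,
    ← Finset.sum_add_distrib]

theorem wop_mul (h₁ : DifferentiableAt ℝ f₁ x) (h₂ : DifferentiableAt ℝ f₂ x) :
    wop c i (fun y => f₁ y * f₂ y) x = wop c i f₁ x * f₂ x + f₁ x * wop c i f₂ x := by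
  unfold wop; rw [fderiv_fun_mul h₁ h₂]; simp [smul_eq_mul]; ring

theorem wop_const_mul (a : ℂ) (h : DifferentiableAt ℝ f₁ x) :
    wop c i (fun y => a * f₁ y) x = a * wop c i f₁ x := by
  unfold wop; rw [fderiv_const_mul h]; simp; ring

theorem diffAt_finset_prod {ι : Type*} [DecidableEq ι] {s : Finset ι}
    {F : ι → (Fin n → ℂ) → ℂ} (h : ∀ j ∈ s, DifferentiableAt ℝ (F j) x) :
    DifferentiableAt ℝ (fun y => ∏ j ∈ s, F j y) x :=
  (HasFDerivAt.finset_prod (fun j hj => (h j hj).hasFDerivAt)).differentiableAt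

theorem wop_prod {ι : Type*} [DecidableEq ι] (s : Finset ι) {F : ι → (Fin n → ℂ) → ℂ}
    (h : ∀ j ∈ s, DifferentiableAt ℝ (F j) x) :
    wop c i (fun y => ∏ j ∈ s, F j y) x
      = ∑ j ∈ s, wop c i (F j) x * ∏ k ∈ s.erase j, F k x := by
  unfold wop
  rw [fderiv_finset_prod h]
  simp only [ContinuousLinearMap.coe_sum', Finset.sum_apply, ContinuousLinearMap.coe_smul',
    Pi.smul_apply, smul_eq_mul, Finset.mul_sum, ← Finset.sum_add_distrib]
  refine Finset.sum_congr rfl fun j hj => ?_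
  ring


open scoped ContDiff

theorem wop_contDiffOn {U : Set (Fin n → ℂ)} (hU : IsOpen U)
    (hf : ContDiffOn ℝ (⊤ : ℕ∞) f₁ U) : ContDiffOn ℝ (⊤ : ℕ∞) (wop c i f₁) U := by
  have hF : ContDiffOn ℝ (⊤ : ℕ∞) (fderiv ℝ f₁) U := hf.fderiv_of_isOpen hU (by simp)
  have h1 : ContDiffOn ℝ (⊤ : ℕ∞) (fun y => fderiv ℝ f₁ y (Pi.single i 1)) U :=
    hF.clm_apply contDiffOn_const
  have h2 : ContDiffOn ℝ (⊤ : ℕ∞) (fun y => fderiv ℝ f₁ y (Pi.single i Complex.I)) U :=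
    hF.clm_apply contDiffOn_const
  exact contDiffOn_const.mul (h1.add (contDiffOn_const.mul h2))

theorem diffAt_of_contDiffOn {U : Set (Fin n → ℂ)} (hU : IsOpen U)
    (hf : ContDiffOn ℝ (⊤ : ℕ∞) f₁ U) (hx : x ∈ U) : DifferentiableAt ℝ f₁ x :=
  (hf.contDiffAt (hU.mem_nhds hx)).differentiableAt (by simp)

theorem wop_comm {U : Set (Fin n → ℂ)} (hU : IsOpen U)
    (hf : ContDiffOn ℝ (⊤ : ℕ∞) f₁ U) (hx : x ∈ U) :
    wop c i (wop c' j f₁) x = wop c' j (wop c i f₁) x := by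
  have hF : ContDiffOn ℝ (⊤ : ℕ∞) (fderiv ℝ f₁) U := hf.fderiv_of_isOpen hU (by simp)
  have hdF : DifferentiableAt ℝ (fderiv ℝ f₁) x :=
    (hF.contDiffAt (hU.mem_nhds hx)).differentiableAt (by simp)
  have hdirdiff : ∀ v : Fin n → ℂ, DifferentiableAt ℝ (fun y => fderiv ℝ f₁ y v) x :=
    fun v => hdF.clm_apply (differentiableAt_const v)
  have key : ∀ v w : Fin n → ℂ,
      fderiv ℝ (fun y => fderiv ℝ f₁ y v) x w = fderiv ℝ (fderiv ℝ f₁) x w v := by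
    intro v w
    rw [fderiv_clm_apply hdF (differentiableAt_const v)]
    simp
  have hPQ : ∀ (a : ℂ) (v₁ v₂ u : Fin n → ℂ),
      fderiv ℝ (fun y => (1 / 2 : ℂ) * (fderiv ℝ f₁ y v₁ + a * fderiv ℝ f₁ y v₂)) x u
        = (1 / 2 : ℂ) * (fderiv ℝ (fderiv ℝ f₁) x u v₁
            + a * fderiv ℝ (fderiv ℝ f₁) x u v₂) := by
    intro a v₁ v₂ u
    rw [fderiv_const_mul ((hdirdiff v₁).fun_add ((hdirdiff v₂).const_mul a)),
      fderiv_fun_add (hdirdiff v₁) ((hdirdiff v₂).const_mul a),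
      fderiv_const_mul (hdirdiff v₂)]
    simp only [ContinuousLinearMap.add_apply, ContinuousLinearMap.coe_smul', Pi.smul_apply,
      smul_eq_mul, key]
  have hsymm := (hf.contDiffAt (hU.mem_nhds hx)).isSymmSndFDerivAt (by simp [minSmoothness_of_isRCLikeNormedField]; exact WithTop.coe_le_coe.mpr le_top)
  unfold wop
  simp only [hPQ]
  linear_combination (1 / 4 : ℂ) * hsymm.eq (Pi.single i 1) (Pi.single j 1)
    + (c' / 4) * hsymm.eq (Pi.single i 1) (Pi.single j Complex.I)
    + (c / 4) * hsymm.eq (Pi.single i Complex.I) (Pi.single j 1)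
    + (c * c' / 4) * hsymm.eq (Pi.single i Complex.I) (Pi.single j Complex.I)

theorem wopI_eq_zero_of_holo (h : DifferentiableAt ℂ f₁ x) :
    wop Complex.I i f₁ x = 0 := by
  have h1 : fderiv ℝ f₁ x = (fderiv ℂ f₁ x).restrictScalars ℝ := h.fderiv_restrictScalars ℝ
  have h2 : (Pi.single i Complex.I : Fin n → ℂ) = Complex.I • (Pi.single i (1 : ℂ) : Fin n → ℂ) := by
    funext p
    by_cases hp : p = i <;> simp [Pi.single_apply, hp]
  have h3 : fderiv ℝ f₁ x (Pi.single i Complex.I)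
      = Complex.I * fderiv ℝ f₁ x (Pi.single i 1) := by
    rw [h1, h2]
    simp only [ContinuousLinearMap.coe_restrictScalars', map_smul, smul_eq_mul]
  unfold wop
  rw [h3, ← mul_assoc, Complex.I_mul_I]
  ring

theorem wop_log {d : (Fin n → ℂ) → ℂ} (hd : DifferentiableAt ℝ d x)
    (hx : d x ∈ Complex.slitPlane) :
    wop c i (fun y => Complex.log (d y)) x = (d x)⁻¹ * wop c i d x := by
  have h1 : HasFDerivAt (fun y => Complex.log (d y))
      (((d x)⁻¹ : ℂ) • fderiv ℝ d x) x := by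
    have hl := ((Complex.hasDerivAt_log hx).hasFDerivAt.restrictScalars ℝ).comp x
      hd.hasFDerivAt
    refine hl.congr_fderiv ?_
    ext v
    simp [smul_eq_mul]
    ring
  unfold wop
  rw [h1.fderiv]
  simp [smul_eq_mul]
  ring


theorem contDiffOn_finset_prod {ι : Type*} {U : Set (Fin n → ℂ)} (s : Finset ι)
    {F : ι → (Fin n → ℂ) → ℂ} (h : ∀ j ∈ s, ContDiffOn ℝ (⊤ : ℕ∞) (F j) U) :
    ContDiffOn ℝ (⊤ : ℕ∞) (fun y => ∏ j ∈ s, F j y) U := by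
  classical
  revert h
  refine Finset.induction_on s ?_ ?_
  · intro _; simpa using contDiffOn_const
  · intro a s ha ih h
    have e : (fun y => ∏ j ∈ insert a s, F j y) = fun y => F a y * ∏ j ∈ s, F j y := by
      funext y; exact Finset.prod_insert ha
    rw [e]
    exact (h a (Finset.mem_insert_self a s)).mul
      (ih fun j hj => h j (Finset.mem_insert_of_mem hj))

theorem contDiffOn_det {U : Set (Fin n → ℂ)} {M : (Fin n → ℂ) → Matrix (Fin n) (Fin n) ℂ}
    (h : ∀ p q, ContDiffOn ℝ (⊤ : ℕ∞) (fun y => M y p q) U) :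
    ContDiffOn ℝ (⊤ : ℕ∞) (fun y => (M y).det) U := by
  simp only [Matrix.det_apply']
  exact ContDiffOn.sum fun σ _ =>
    contDiffOn_const.mul (contDiffOn_finset_prod Finset.univ fun p _ => h (σ p) p)

theorem det_updateColumn_expand (A : Matrix (Fin n) (Fin n) ℂ) (i : Fin n) (b : Fin n → ℂ) :
    (A.updateCol i b).det = ∑ p, A.adjugate i p * b p := by
  rw [← Matrix.cramer_apply, Matrix.cramer_eq_adjugate_mulVec]
  simp [Matrix.mulVec, dotProduct]

theorem wop_det {U : Set (Fin n → ℂ)} (hU : IsOpen U)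
    {M : (Fin n → ℂ) → Matrix (Fin n) (Fin n) ℂ}
    (h : ∀ p q, ContDiffOn ℝ (⊤ : ℕ∞) (fun y => M y p q) U) (hx : x ∈ U) (a : Fin n) :
    wop c a (fun y => (M y).det) x
      = ∑ i, ∑ p, (M x).adjugate i p * wop c a (fun y => M y p i) x := by
  classical
  have hdiff : ∀ p q, DifferentiableAt ℝ (fun y => M y p q) x :=
    fun p q => diffAt_of_contDiffOn hU (h p q) hx
  have e0 : (fun y => (M y).det)
      = fun y => ∑ σ : Equiv.Perm (Fin n),
          ((Equiv.Perm.sign σ : ℤ) : ℂ) * ∏ p, M y (σ p) p := by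
    funext y; rw [Matrix.det_apply']
  rw [e0, wop_sum Finset.univ (fun σ _ =>
    DifferentiableAt.const_mul (diffAt_finset_prod (fun p _ => hdiff (σ p) p)) _)]
  have e1 : ∀ σ : Equiv.Perm (Fin n),
      wop c a (fun y => ((Equiv.Perm.sign σ : ℤ) : ℂ) * ∏ p, M y (σ p) p) x
        = ((Equiv.Perm.sign σ : ℤ) : ℂ) * ∑ p, wop c a (fun y => M y (σ p) p) x
            * ∏ q ∈ Finset.univ.erase p, M x (σ q) q := by
    intro σ
    rw [wop_const_mul _ (diffAt_finset_prod (fun p _ => hdiff (σ p) p)),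
      wop_prod Finset.univ (fun p _ => hdiff (σ p) p)]
  simp only [e1]
  have e2 : ∀ i : Fin n, ∑ p, (M x).adjugate i p * wop c a (fun y => M y p i) x
      = ∑ σ : Equiv.Perm (Fin n), ((Equiv.Perm.sign σ : ℤ) : ℂ)
          * (wop c a (fun y => M y (σ i) i) x * ∏ q ∈ Finset.univ.erase i, M x (σ q) q) := by
    intro i
    rw [← det_updateColumn_expand (M x) i (fun p => wop c a (fun y => M y p i) x),
      Matrix.det_apply']
    refine Finset.sum_congr rfl fun σ _ => ?_
    congr 1
    rw [← Finset.mul_prod_erase Finset.univ _ (Finset.mem_univ i)]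
    congr 1
    · simp [Matrix.updateCol_apply]
    · refine Finset.prod_congr rfl fun q hq => ?_
      have hqi : q ≠ i := Finset.ne_of_mem_erase hq
      simp [Matrix.updateCol_apply, hqi]
  have e3 : ∑ σ : Equiv.Perm (Fin n), ((Equiv.Perm.sign σ : ℤ) : ℂ)
        * ∑ p, wop c a (fun y => M y (σ p) p) x * ∏ q ∈ Finset.univ.erase p, M x (σ q) q
      = ∑ i : Fin n, ∑ σ : Equiv.Perm (Fin n), ((Equiv.Perm.sign σ : ℤ) : ℂ)
          * (wop c a (fun y => M y (σ i) i) x * ∏ q ∈ Finset.univ.erase i, M x (σ q) q) := by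
    simp only [Finset.mul_sum]
    exact Finset.sum_comm
  rw [e3]
  exact Finset.sum_congr rfl fun i _ => (e2 i).symm

end WirtingerAux

open WirtingerAux

theorem dbar_laplacian_eq_contraction_ricci
    {n : ℕ} (U : Set (Fin n → ℂ)) (hU : IsOpen U)
    -- the coefficient matrix `ω_{i j̄}` of the Kähler form
    (g : (Fin n → ℂ) → Matrix (Fin n) (Fin n) ℂ)
    (hsmooth : ∀ i j, ContDiffOn ℝ (⊤ : ℕ∞) (fun x => g x i j) U)
    -- positive-definite Hermitian
    (hpos : ∀ x ∈ U, (g x).PosDef)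
    -- the Kähler condition `∂_{zᵏ} ω_{i j̄} = ∂_{zⁱ} ω_{k j̄}`
    (hKahler : ∀ i j k, ∀ x ∈ U,
      wirtingerD k (fun y => g y i j) x = wirtingerD i (fun y => g y k j) x)
    -- the inverse matrix `ginv x i j = ω^{i j̄}(x)`, with `∑_j ω_{i j̄} ω^{k j̄} = δᵢᵏ`
    (ginv : (Fin n → ℂ) → Matrix (Fin n) (Fin n) ℂ)
    (hinv : ∀ x ∈ U, ∀ i k, (∑ j, g x i j * ginv x k j) = if i = k then 1 else 0)
    (f₀ : (Fin n → ℂ) → ℂ)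
    (hf₀ : ContDiffOn ℝ (⊤ : ℕ∞) f₀ U)
    -- each `∑_j ω^{i j̄} ∂_{z̄ʲ} f₀` is holomorphic on `U`
    (hhol : ∀ i, DifferentiableOn ℂ
      (fun x => ∑ j, ginv x i j * wirtingerDBar j f₀ x) U) :
    ∀ l : Fin n, ∀ x ∈ U,
      -- `(1/4π)·∂_{z̄ˡ}(Δf₀)`, where `Δf₀ = 4π·∑_{i,j} ω^{j̄ i} ∂_{z̄ʲ}(∂_{zⁱ} f₀)`
      -- and `ω^{j̄ i} = −ω^{i j̄}`
      (4 * (Real.pi : ℂ))⁻¹ *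
        wirtingerDBar l
          (fun y => (4 * (Real.pi : ℂ)) *
            ∑ i, ∑ j, (-(ginv y i j)) * wirtingerDBar j (wirtingerD i f₀) y) x
      -- `= ∑_{j,k} (∂_{z̄ʲ} f₀)·ω^{k j̄}·(Ric)_{k l̄}`, with
      -- `(Ric)_{k l̄} = −∂_{zᵏ} ∂_{z̄ˡ} log det(ω_{i j̄})`
      = ∑ j, ∑ k, wirtingerDBar j f₀ x * ginv x k j *
          (-(wirtingerD k
              (fun y => wirtingerDBar l (fun w => Complex.log (g w).det) y) x)) := by
    classical
  simp only [wirtingerD_eq, wirtingerDBar_eq] at hKahler hhol ⊢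
  -- determinant positivity facts
  have hdet_pos : ∀ y ∈ U, (0 : ℂ) < (g y).det := fun y hy => (hpos y hy).det_pos
  have hdet_ne : ∀ y ∈ U, (g y).det ≠ 0 := fun y hy => (hdet_pos y hy).ne'
  have hdet_slit : ∀ y ∈ U, (g y).det ∈ Complex.slitPlane := by
    intro y hy
    rw [Complex.mem_slitPlane_iff]
    have h1 := (Complex.lt_def.mp (hdet_pos y hy)).1
    simp only [Complex.zero_re] at h1
    exact Or.inl h1
  -- matrix inverse identities
  have hmat : ∀ y ∈ U, g y * (ginv y).transpose = 1 := by
    intro y hy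
    ext i k
    simpa [Matrix.mul_apply, Matrix.transpose_apply, Matrix.one_apply] using hinv y hy i k
  have hginv_eq : ∀ y ∈ U, (g y)⁻¹ = (ginv y).transpose := fun y hy =>
    Matrix.inv_eq_right_inv (hmat y hy)
  have hinv' : ∀ y ∈ U, ∀ j k, (∑ i, ginv y i j * g y i k) = if j = k then 1 else 0 := by
    intro y hy j k
    have h2 : (ginv y).transpose * g y = 1 := mul_eq_one_comm.mp (hmat y hy)
    have h3 := congrFun (congrFun h2 j) k
    simpa [Matrix.mul_apply, Matrix.transpose_apply, Matrix.one_apply] using h3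
  -- smoothness facts
  have hdetS : ContDiffOn ℝ (⊤ : ℕ∞) (fun y => (g y).det) U := contDiffOn_det hsmooth
  have hadjS : ∀ p q, ContDiffOn ℝ (⊤ : ℕ∞) (fun y => (g y).adjugate p q) U := by
    intro p q
    simp only [Matrix.adjugate_apply]
    apply contDiffOn_det
    intro a b
    by_cases hb : a = q
    · simp only [Matrix.updateRow_apply, hb, if_true]
      exact contDiffOn_const
    · simp only [Matrix.updateRow_apply, hb, if_false]
      exact hsmooth a b
  have hdetinvS : ContDiffOn ℝ (⊤ : ℕ∞) (fun y => ((g y).det)⁻¹) U := by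
    intro y hy
    exact ((contDiffAt_inv (𝕜 := ℝ) (hdet_ne y hy)).comp y
      (hdetS.contDiffAt (hU.mem_nhds hy))).contDiffWithinAt
  have hkey_inv : ∀ y ∈ U, ∀ p q, ginv y p q = ((g y).det)⁻¹ * (g y).adjugate q p := by
    intro y hy p q
    have h1 : ginv y p q = (g y)⁻¹ q p := by rw [hginv_eq y hy]; rfl
    rw [h1, Matrix.inv_def]
    simp [Matrix.smul_apply, smul_eq_mul, Ring.inverse_eq_inv']
  have hginvS : ∀ p q, ContDiffOn ℝ (⊤ : ℕ∞) (fun y => ginv y p q) U := by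
    intro p q
    exact (hdetinvS.mul (hadjS q p)).congr fun y hy => hkey_inv y hy p q
  have hDbfS : ∀ j : Fin n, ContDiffOn ℝ (⊤ : ℕ∞) (wop Complex.I j f₀) U := fun j =>
    wop_contDiffOn hU hf₀
  have hLS : ContDiffOn ℝ (⊤ : ℕ∞) (fun y => Complex.log ((g y).det)) U := by
    intro y hy
    exact (((Complex.contDiffAt_log (hdet_slit y hy)).restrict_scalars ℝ).comp y
      (hdetS.contDiffAt (hU.mem_nhds hy))).contDiffWithinAt
  have hfunS : ∀ k, ContDiffOn ℝ (⊤ : ℕ∞) (fun y => ∑ j, ginv y k j * wop Complex.I j f₀ y) U :=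
    fun k => ContDiffOn.sum fun j _ => (hginvS k j).mul (hDbfS j)
  have hvanish : ∀ (m k : Fin n), ∀ y ∈ U,
      wop Complex.I m (fun w => ∑ j, ginv w k j * wop Complex.I j f₀ w) y = 0 := by
    intro m k y hy
    exact wopI_eq_zero_of_holo ((hhol k).differentiableAt (hU.mem_nhds hy))
  -- differentiating the inverse relation
  have hstar : ∀ (c₀ : ℂ) (a i k : Fin n), ∀ y ∈ U,
      (∑ j, (wop c₀ a (fun w => g w i j) y * ginv y k j
          + g y i j * wop c₀ a (fun w => ginv w k j) y)) = 0 := by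
    intro c₀ a i k y hy
    have h0 : wop c₀ a (fun w => ∑ j, g w i j * ginv w k j) y = 0 := by
      rw [wop_congr_of_eqOn (f₂ := fun _ => if i = k then (1 : ℂ) else 0) hU hy
        (fun w hw => hinv w hw i k)]
      exact wop_const _
    rw [wop_sum (F := fun j w => g w i j * ginv w k j) Finset.univ
      (fun j _ => (diffAt_of_contDiffOn hU (hsmooth i j) hy).mul
        (diffAt_of_contDiffOn hU (hginvS k j) hy))] at h0
    rw [← h0]
    exact Finset.sum_congr rfl fun j _ =>
      (wop_mul (diffAt_of_contDiffOn hU (hsmooth i j) hy)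
        (diffAt_of_contDiffOn hU (hginvS k j) hy)).symm
  have hdginv : ∀ (c₀ : ℂ) (a k p : Fin n), ∀ y ∈ U,
      wop c₀ a (fun w => ginv w k p) y
        = -∑ i, ∑ j, ginv y i p * wop c₀ a (fun w => g w i j) y * ginv y k j := by
    intro c₀ a k p y hy
    have key : ∀ i, (∑ j, g y i j * wop c₀ a (fun w => ginv w k j) y)
        = -∑ j, wop c₀ a (fun w => g w i j) y * ginv y k j := by
      intro i
      have h1 := hstar c₀ a i k y hy
      rw [Finset.sum_add_distrib] at h1
      linear_combination h1
    have s1 : ∑ j, (if p = j then (1 : ℂ) else 0) * wop c₀ a (fun w => ginv w k j) y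
        = wop c₀ a (fun w => ginv w k p) y := by
      simp [ite_mul, Finset.sum_ite_eq]
    rw [← s1]
    calc ∑ j, (if p = j then (1 : ℂ) else 0) * wop c₀ a (fun w => ginv w k j) y
        = ∑ j, (∑ i, ginv y i p * g y i j) * wop c₀ a (fun w => ginv w k j) y :=
          Finset.sum_congr rfl fun j _ => by rw [← hinv' y hy p j]
      _ = ∑ j, ∑ i, ginv y i p * (g y i j * wop c₀ a (fun w => ginv w k j) y) := by
          refine Finset.sum_congr rfl fun j _ => ?_
          rw [Finset.sum_mul]
          exact Finset.sum_congr rfl fun i _ => by ring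
      _ = ∑ i, ∑ j, ginv y i p * (g y i j * wop c₀ a (fun w => ginv w k j) y) :=
          Finset.sum_comm
      _ = ∑ i, ginv y i p * ∑ j, g y i j * wop c₀ a (fun w => ginv w k j) y := by
          refine Finset.sum_congr rfl fun i _ => ?_
          rw [Finset.mul_sum]
      _ = ∑ i, ginv y i p * (-∑ j, wop c₀ a (fun w => g w i j) y * ginv y k j) :=
          Finset.sum_congr rfl fun i _ => by rw [key i]
      _ = ∑ i, -∑ j, ginv y i p * wop c₀ a (fun w => g w i j) y * ginv y k j := by
          refine Finset.sum_congr rfl fun i _ => ?_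
          rw [mul_neg, Finset.mul_sum]
          congr 1
          exact Finset.sum_congr rfl fun j _ => by ring
      _ = -∑ i, ∑ j, ginv y i p * wop c₀ a (fun w => g w i j) y * ginv y k j :=
          Finset.sum_neg_distrib _
  -- derivative of log det
  have hdlog : ∀ (c₀ : ℂ) (a : Fin n), ∀ y ∈ U,
      wop c₀ a (fun w => Complex.log ((g w).det)) y
        = ∑ p, ∑ q, ginv y p q * wop c₀ a (fun w => g w p q) y := by
    intro c₀ a y hy
    rw [wop_log (diffAt_of_contDiffOn hU hdetS hy) (hdet_slit y hy),
      wop_det hU hsmooth hy a]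
    calc ((g y).det)⁻¹ * ∑ i, ∑ p, (g y).adjugate i p * wop c₀ a (fun w => g w p i) y
        = ∑ i, ∑ p, ((g y).det)⁻¹ * (g y).adjugate i p * wop c₀ a (fun w => g w p i) y := by
          rw [Finset.mul_sum]
          refine Finset.sum_congr rfl fun i _ => ?_
          rw [Finset.mul_sum]
          exact Finset.sum_congr rfl fun p _ => by ring
      _ = ∑ i, ∑ p, ginv y p i * wop c₀ a (fun w => g w p i) y := by
          refine Finset.sum_congr rfl fun i _ => Finset.sum_congr rfl fun p _ => ?_
          rw [hkey_inv y hy p i]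
      _ = ∑ p, ∑ i, ginv y p i * wop c₀ a (fun w => g w p i) y := Finset.sum_comm
  -- sum juggling helpers
  have sum_swap2 : ∀ (u : Fin n → Fin n → ℂ), (∑ a, ∑ b, u a b) = ∑ b, ∑ a, u a b :=
    fun u => Finset.sum_comm
  have sum_rot : ∀ (t : Fin n → Fin n → Fin n → Fin n → ℂ),
      (∑ k, ∑ j, ∑ i, ∑ q, t k j i q) = ∑ i, ∑ j, ∑ k, ∑ q, t k j i q := by
    intro t
    calc (∑ k, ∑ j, ∑ i, ∑ q, t k j i q)
        = ∑ k, ∑ i, ∑ j, ∑ q, t k j i q := Finset.sum_congr rfl fun k _ => sum_swap2 _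
      _ = ∑ i, ∑ k, ∑ j, ∑ q, t k j i q := sum_swap2 _
      _ = ∑ i, ∑ j, ∑ k, ∑ q, t k j i q := Finset.sum_congr rfl fun i _ => sum_swap2 _
  -- the key computation for T'
  have hT' : ∀ y ∈ U,
      (∑ k, ∑ j, wop (-Complex.I) k (fun w => ginv w k j) y * wop Complex.I j f₀ y)
        = -∑ p, (∑ j, ginv y p j * wop Complex.I j f₀ y)
            * wop (-Complex.I) p (fun w => Complex.log ((g w).det)) y := by
    intro y hy
    have e1 : ∀ k j, wop (-Complex.I) k (fun w => ginv w k j) y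
        = -∑ i, ∑ q, ginv y i j * wop (-Complex.I) i (fun w => g w k q) y * ginv y k q := by
      intro k j
      rw [hdginv (-Complex.I) k k j y hy]
      congr 1
      refine Finset.sum_congr rfl fun i _ => Finset.sum_congr rfl fun q _ => ?_
      rw [hKahler i q k y hy]
    calc ∑ k, ∑ j, wop (-Complex.I) k (fun w => ginv w k j) y * wop Complex.I j f₀ y
        = ∑ k, ∑ j, ∑ i, ∑ q, -(ginv y i j * wop (-Complex.I) i (fun w => g w k q) y
            * ginv y k q * wop Complex.I j f₀ y) := by
          refine Finset.sum_congr rfl fun k _ => Finset.sum_congr rfl fun j _ => ?_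
          rw [e1 k j, neg_mul, Finset.sum_mul, ← Finset.sum_neg_distrib]
          refine Finset.sum_congr rfl fun i _ => ?_
          rw [Finset.sum_mul, ← Finset.sum_neg_distrib]
      _ = ∑ i, ∑ j, ∑ k, ∑ q, -(ginv y i j * wop (-Complex.I) i (fun w => g w k q) y
            * ginv y k q * wop Complex.I j f₀ y) := sum_rot _
      _ = ∑ i, -((∑ j, ginv y i j * wop Complex.I j f₀ y)
            * (∑ k, ∑ q, ginv y k q * wop (-Complex.I) i (fun w => g w k q) y)) := by
          refine Finset.sum_congr rfl fun i _ => ?_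
          have expand : ((∑ j, ginv y i j * wop Complex.I j f₀ y)
              * (∑ k, ∑ q, ginv y k q * wop (-Complex.I) i (fun w => g w k q) y))
              = ∑ j, ∑ k, ∑ q, ginv y i j * wop Complex.I j f₀ y
                  * (ginv y k q * wop (-Complex.I) i (fun w => g w k q) y) := by
            rw [Finset.sum_mul]
            refine Finset.sum_congr rfl fun j _ => ?_
            rw [Finset.mul_sum]
            refine Finset.sum_congr rfl fun k _ => ?_
            rw [Finset.mul_sum]
          rw [expand, ← Finset.sum_neg_distrib]
          refine Finset.sum_congr rfl fun j _ => ?_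
          rw [← Finset.sum_neg_distrib]
          refine Finset.sum_congr rfl fun k _ => ?_
          rw [← Finset.sum_neg_distrib]
          exact Finset.sum_congr rfl fun q _ => by ring
      _ = -∑ p, (∑ j, ginv y p j * wop Complex.I j f₀ y)
            * wop (-Complex.I) p (fun w => Complex.log ((g w).det)) y := by
          rw [← Finset.sum_neg_distrib]
          refine Finset.sum_congr rfl fun p _ => ?_
          rw [hdlog (-Complex.I) p y hy]
  -- main assembly
  intro l x hx
  have hAS : ContDiffOn ℝ (⊤ : ℕ∞)
      (fun y => ∑ i, ∑ j, -ginv y i j * wop Complex.I j (wop (-Complex.I) i f₀) y) U :=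
    ContDiffOn.sum fun i _ => ContDiffOn.sum fun j _ =>
      ((hginvS i j).neg.mul (wop_contDiffOn hU (wop_contDiffOn hU hf₀)))
  have h4pi : (4 * (Real.pi : ℂ)) ≠ 0 :=
    mul_ne_zero four_ne_zero (Complex.ofReal_ne_zero.mpr Real.pi_ne_zero)
  rw [wop_const_mul (4 * (Real.pi : ℂ)) (diffAt_of_contDiffOn hU hAS hx), ← mul_assoc,
    inv_mul_cancel₀ h4pi, one_mul]
  -- rewrite A as T' minus divergence part
  have hA_eq : ∀ y ∈ U,
      (∑ i, ∑ j, -ginv y i j * wop Complex.I j (wop (-Complex.I) i f₀) y)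
        = (∑ k, ∑ j, wop (-Complex.I) k (fun w => ginv w k j) y * wop Complex.I j f₀ y)
          - ∑ k, wop (-Complex.I) k (fun w => ∑ j, ginv w k j * wop Complex.I j f₀ w) y := by
    intro y hy
    have expand : ∀ k, wop (-Complex.I) k (fun w => ∑ j, ginv w k j * wop Complex.I j f₀ w) y
        = ∑ j, (wop (-Complex.I) k (fun w => ginv w k j) y * wop Complex.I j f₀ y
            + ginv y k j * wop (-Complex.I) k (wop Complex.I j f₀) y) := by
      intro k
      rw [wop_sum (F := fun j w => ginv w k j * wop Complex.I j f₀ w) Finset.univ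
        (fun j _ => (diffAt_of_contDiffOn hU (hginvS k j) hy).mul
          (diffAt_of_contDiffOn hU (hDbfS j) hy))]
      exact Finset.sum_congr rfl fun j _ =>
        wop_mul (diffAt_of_contDiffOn hU (hginvS k j) hy)
          (diffAt_of_contDiffOn hU (hDbfS j) hy)
    simp only [expand]
    rw [← Finset.sum_sub_distrib]
    refine Finset.sum_congr rfl fun k _ => ?_
    rw [← Finset.sum_sub_distrib]
    refine Finset.sum_congr rfl fun j _ => ?_
    rw [wop_comm (c := Complex.I) (c' := -Complex.I) (i := j) (j := k) hU hf₀ hy]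
    ring
  rw [wop_congr_of_eqOn hU hx hA_eq]
  have hT'S : ContDiffOn ℝ (⊤ : ℕ∞)
      (fun y => ∑ k, ∑ j, wop (-Complex.I) k (fun w => ginv w k j) y
        * wop Complex.I j f₀ y) U :=
    ContDiffOn.sum fun k _ => ContDiffOn.sum fun j _ =>
      (wop_contDiffOn hU (hginvS k j)).mul (hDbfS j)
  have hDzhS : ∀ k, ContDiffOn ℝ (⊤ : ℕ∞)
      (wop (-Complex.I) k (fun w => ∑ j, ginv w k j * wop Complex.I j f₀ w)) U :=
    fun k => wop_contDiffOn hU (hfunS k)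
  rw [wop_sub (diffAt_of_contDiffOn hU hT'S hx)
    (diffAt_of_contDiffOn hU (ContDiffOn.sum fun k _ => hDzhS k) hx)]
  rw [wop_sum (F := fun k y => wop (-Complex.I) k
      (fun w => ∑ j, ginv w k j * wop Complex.I j f₀ w) y) Finset.univ
    (fun k _ => diffAt_of_contDiffOn hU (hDzhS k) hx)]
  have hz : ∀ k : Fin n, wop Complex.I l
      (fun y => wop (-Complex.I) k (fun w => ∑ j, ginv w k j * wop Complex.I j f₀ w) y) x
        = 0 := by
    intro k
    rw [wop_comm (c := Complex.I) (c' := -Complex.I) (i := l) (j := k) hU (hfunS k) hx,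
      wop_congr_of_eqOn (f₂ := fun _ => (0 : ℂ)) hU hx (hvanish l k)]
    exact wop_const 0
  simp only [hz, Finset.sum_const_zero, sub_zero]
  rw [wop_congr_of_eqOn hU hx (hT')]
  rw [wop_neg, wop_sum (F := fun p y => (∑ j, ginv y p j * wop Complex.I j f₀ y)
      * wop (-Complex.I) p (fun w => Complex.log ((g w).det)) y) Finset.univ
    (fun p _ => (diffAt_of_contDiffOn hU (hfunS p) hx).mul
      (diffAt_of_contDiffOn hU (wop_contDiffOn hU hLS) hx))]
  have final : ∀ p : Fin n, wop Complex.I l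
      (fun y => (∑ j, ginv y p j * wop Complex.I j f₀ y)
        * wop (-Complex.I) p (fun w => Complex.log ((g w).det)) y) x
      = (∑ j, ginv x p j * wop Complex.I j f₀ x)
          * wop (-Complex.I) p (wop Complex.I l (fun w => Complex.log ((g w).det))) x := by
    intro p
    rw [wop_mul (diffAt_of_contDiffOn hU (hfunS p) hx)
      (diffAt_of_contDiffOn hU (wop_contDiffOn hU hLS) hx)]
    rw [hvanish l p x hx, zero_mul, zero_add]
    rw [wop_comm (c := Complex.I) (c' := -Complex.I) (i := l) (j := p) hU hLS hx]
  simp only [final]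
  have rhs_eq : (∑ j, ∑ k, wop Complex.I j f₀ x * ginv x k j
        * -wop (-Complex.I) k
            (fun y => wop Complex.I l (fun w => Complex.log (g w).det) y) x)
      = ∑ p, -((∑ j, ginv x p j * wop Complex.I j f₀ x)
          * wop (-Complex.I) p (wop Complex.I l (fun w => Complex.log ((g w).det))) x) := by
    rw [sum_swap2]
    refine Finset.sum_congr rfl fun p _ => ?_
    rw [Finset.sum_mul, ← Finset.sum_neg_distrib]
    exact Finset.sum_congr rfl fun j _ => by ring
  rw [rhs_eq, ← Finset.sum_neg_distrib]
end

section
/- Let (X, ω, J, L) be a COMPACT prequantizable Kähler manifold with a Lie group G acting on (X, L) preserving the Kähler structure, the Hermitian metric and the moment map μ. Then for every ξ ∈ 𝔤 and every k > 0, the Berezin-Toeplitz operator of the level-k quantum moment map equals the infinitesimal action on holomorphic sections: T_{k·μ_k(ξ), k} = β_k(ξ) = ∇^{⊗k}_{V_ξ} − 2π√-1·k·m_{μ(ξ)} as operators on ℋ_k = H⁰_∂̄(X, L^{⊗k}); here k·μ_k(ξ) = (2π/√-1)·k·(μ(ξ) − (1/4πk)·Δμ(ξ)) up to the normalization −2πk√-1·(μ(ξ)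 − (1/4πk)Δμ(ξ)). That is, the diagram 𝔤 → C^∞(X) → gl(ℋ_k) with the Toeplitz map T commutes with β_k. -/
/-!
Since `Π_k ∘ incl = id`, `β_k(ξ)` is the Toeplitz compression of
`∇^{⊗k}_{V_ξ} − 2π√-1·k·m_{μ(ξ)}`. Tuynman's formula turns the covariant-derivative part into
`(√-1/2)·T_{Δμ(ξ)}`, and this is exactly the Laplacian correction in
`T_{k·μ_k(ξ)} = −2πk√-1·T_{μ(ξ)} + (√-1/2)·T_{Δμ(ξ)}`, by linearity of `f ↦ T_f`.
-/

section Toeplitz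

variable {R A S H : Type*} [CommRing R] [AddCommGroup A] [Module R A]
  [AddCommGroup S] [Module R S] [AddCommGroup H] [Module R H]

def toeplitz (Pk : S →ₗ[R] H) (incl : H →ₗ[R] S) (m : A →ₗ[R] Module.End R S) :
    A →ₗ[R] H →ₗ[R] H where
  toFun f := Pk ∘ₗ m f ∘ₗ incl
  map_add' f g := by
    rw [map_add, LinearMap.add_comp, LinearMap.comp_add]
  map_smul' c f := by
    rw [map_smul, LinearMap.smul_comp, LinearMap.comp_smul, RingHom.id_apply]

theorem eq_comp_comp_of_comp_eq {Pk : S →ₗ[R] H} {incl : H →ₗ[R] S}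
    (hproj : Pk ∘ₗ incl = LinearMap.id) {B : H →ₗ[R] H} {F : S →ₗ[R] S}
    (h : incl ∘ₗ B = F ∘ₗ incl) : B = Pk ∘ₗ F ∘ₗ incl := by
  rw [← h, ← LinearMap.comp_assoc, hproj, LinearMap.id_comp]

end Toeplitz

theorem toeplitz_of_quantum_moment_map_eq_infinitesimal_action_general
    (A : Type*) [CommRing A] [Algebra ℂ A]
    (𝔤 : Type*)
    (Vec : Type*)
    (Vfield : 𝔤 → Vec)
    (μ : 𝔤 → A)
    (Δ : A → A)
    -- Hamiltonian vector fields; `V_ξ` is the Hamiltonian vector field of `μ(ξ)`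
    (Ham : A → Vec)
    (hHam : ∀ ξ, Vfield ξ = Ham (μ ξ))
    (k : ℕ) (hk : 0 < k)
    -- sections of `L^{⊗k}`, holomorphic sections, inclusion and orthogonal projection
    (S : Type*) [AddCommGroup S] [Module ℂ S]
    (H : Type*) [AddCommGroup H] [Module ℂ H]
    (incl : H →ₗ[ℂ] S)
    (Pk : S →ₗ[ℂ] H)
    (hproj : Pk ∘ₗ incl = LinearMap.id)
    (covDerS : Vec → S →ₗ[ℂ] S)
    (multS : A → S →ₗ[ℂ] S)
    (hmult_add : ∀ a b : A, multS (a + b) = multS a + multS b)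
    (hmult_smul : ∀ (c : ℂ) (a : A), multS (c • a) = c • multS a)
    -- `β_k(ξ)`: the restriction of `∇^{⊗k}_{V_ξ} − 2π√-1·k·m_{μ(ξ)}` to `ℋ_k`
    (BK : 𝔤 → H →ₗ[ℂ] H)
    (hBK : ∀ ξ, incl ∘ₗ BK ξ
      = (covDerS (Vfield ξ)
          - (2 * (Real.pi : ℂ) * Complex.I * (k : ℂ)) • multS (μ ξ)) ∘ₗ incl)
    -- Tuynman's formula (valid since `X` is compact):
    -- `Π_k ∘ ∇^{⊗k}_{V_f} = (√-1/2)·Π_k ∘ m_{Δf}` on holomorphic sections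
    (hTuynman : ∀ f : A,
      Pk ∘ₗ covDerS (Ham f) ∘ₗ incl
        = (Complex.I / 2) • (Pk ∘ₗ multS (Δ f) ∘ₗ incl)) :
    -- `T_{k·μ_k(ξ),k} = β_k(ξ)`, where
    -- `k·μ_k(ξ) = −2πk√-1·(μ(ξ) − (1/4πk)·Δμ(ξ))`
    ∀ ξ : 𝔤,
      Pk ∘ₗ multS ((-(2 * (Real.pi : ℂ) * (k : ℂ) * Complex.I)) •
          (μ ξ - (4 * (Real.pi : ℂ) * (k : ℂ))⁻¹ • Δ (μ ξ))) ∘ₗ incl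
        = BK ξ := by
  intro ξ
  let m : A →ₗ[ℂ] Module.End ℂ S :=
    { toFun := multS, map_add' := hmult_add, map_smul' := hmult_smul }
  let T := toeplitz Pk incl m
  have hβ : BK ξ = (Complex.I / 2) • T (Δ (μ ξ))
      - (2 * (Real.pi : ℂ) * Complex.I * k) • T (μ ξ) := by
    rw [eq_comp_comp_of_comp_eq hproj (hBK ξ), hHam, LinearMap.sub_comp, LinearMap.comp_sub,
      hTuynman, LinearMap.smul_comp, LinearMap.comp_smul]
    rfl
  have hcoef : -(2 * (Real.pi : ℂ) * k * Complex.I) * (4 * (Real.pi : ℂ) * k)⁻¹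
      = -(Complex.I / 2) := by
    have : (k : ℂ) ≠ 0 := Nat.cast_ne_zero.mpr hk.ne'
    field_simp [Complex.ofReal_ne_zero.mpr Real.pi_ne_zero]
    ring
  change T _ = BK ξ
  rw [hβ, map_smul, map_sub, map_smul, smul_sub, smul_smul, hcoef]
  module

theorem toeplitz_of_quantum_moment_map_eq_infinitesimal_action
    (A : Type*) [CommRing A] [Algebra ℂ A]
    (𝔤 : Type*) [LieRing 𝔤] [LieAlgebra ℝ 𝔤]
    (Vec : Type*)
    (Vfield : 𝔤 → Vec)
    (μ : 𝔤 → A)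
    (Δ : A → A)
    -- Hamiltonian vector fields; `V_ξ` is the Hamiltonian vector field of `μ(ξ)`
    (Ham : A → Vec)
    (hHam : ∀ ξ, Vfield ξ = Ham (μ ξ))
    (k : ℕ) (hk : 0 < k)
    -- sections of `L^{⊗k}`, holomorphic sections, inclusion and orthogonal projection
    (S : Type*) [AddCommGroup S] [Module ℂ S]
    (H : Type*) [AddCommGroup H] [Module ℂ H]
    (incl : H →ₗ[ℂ] S)
    (Pk : S →ₗ[ℂ] H)
    (hproj : Pk ∘ₗ incl = LinearMap.id)
    (covDerS : Vec → S →ₗ[ℂ] S)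
    (multS : A → S →ₗ[ℂ] S)
    (hmult_add : ∀ a b : A, multS (a + b) = multS a + multS b)
    (hmult_smul : ∀ (c : ℂ) (a : A), multS (c • a) = c • multS a)
    -- `β_k(ξ)`: the restriction of `∇^{⊗k}_{V_ξ} − 2π√-1·k·m_{μ(ξ)}` to `ℋ_k`
    (BK : 𝔤 → H →ₗ[ℂ] H)
    (hBK : ∀ ξ, incl ∘ₗ BK ξ
      = (covDerS (Vfield ξ)
          - (2 * (Real.pi : ℂ) * Complex.I * (k : ℂ)) • multS (μ ξ)) ∘ₗ incl)
    -- Tuynman's formula (valid since `X` is compact):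
    -- `Π_k ∘ ∇^{⊗k}_{V_f} = (√-1/2)·Π_k ∘ m_{Δf}` on holomorphic sections
    (hTuynman : ∀ f : A,
      Pk ∘ₗ covDerS (Ham f) ∘ₗ incl
        = (Complex.I / 2) • (Pk ∘ₗ multS (Δ f) ∘ₗ incl)) :
    -- `T_{k·μ_k(ξ),k} = β_k(ξ)`, where
    -- `k·μ_k(ξ) = −2πk√-1·(μ(ξ) − (1/4πk)·Δμ(ξ))`
    ∀ ξ : 𝔤,
      Pk ∘ₗ multS ((-(2 * (Real.pi : ℂ) * (k : ℂ) * Complex.I)) •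
          (μ ξ - (4 * (Real.pi : ℂ) * (k : ℂ))⁻¹ • Δ (μ ξ))) ∘ₗ incl
        = BK ξ :=
  toeplitz_of_quantum_moment_map_eq_infinitesimal_action_general A 𝔤 Vec Vfield μ Δ Ham hHam k hk S
    H incl Pk hproj covDerS multS hmult_add hmult_smul BK hBK hTuynman
end
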